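/- arXiv:1312.5657 — 10 statements merged into one kernel-verified Lean document; each statement's English description precedes it below -/
import Mathlib

section
/- The function D(n) = (-1 + sqrt(1 + 4δB/(nδ̄[αβ]))) / (2δ/(n[αβ])) is increasing in n for n > 0, where δ, δ̄, B, [αβ] are positive constants. -/
theorem stmt_0 (δ δbar B μ : ℝ) (hδ : 0 < δ) (hδbar : 0 < δbar) (hB : 0 < B) (hμ : 0 < μ) :
    StrictMonoOn (fun n : ℝ =>
      (-1 + Real.sqrt (1 + 4 * δ * B / (n * δbar * μ))) / (2 * δ / (n * μ)))
      (Set.Ioi 0) := by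
  have key : ∀ n : ℝ, 0 < n →
      (-1 + Real.sqrt (1 + 4 * δ * B / (n * δbar * μ))) / (2 * δ / (n * μ))
        = 2 * B / δbar / (Real.sqrt (1 + 4 * δ * B / (n * δbar * μ)) + 1) := by
    intro n hn
    set s := Real.sqrt (1 + 4 * δ * B / (n * δbar * μ)) with hs
    have harg : (0:ℝ) ≤ 1 + 4 * δ * B / (n * δbar * μ) := by positivity
    have hs0 : 0 ≤ s := Real.sqrt_nonneg _
    have hsq : s ^ 2 = 1 + 4 * δ * B / (n * δbar * μ) := Real.sq_sqrt harg
    have hs1 : 0 < s + 1 := by linarith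
    have hsq' : (s ^ 2 - 1) * (n * δbar * μ) = 4 * δ * B := by
      field_simp at hsq
      nlinarith [hsq]
    field_simp
    nlinarith [hsq']
  intro x hx y hy hxy
  simp only [Set.mem_Ioi] at hx hy
  simp only
  rw [key x hx, key y hy]
  have hnum : (0:ℝ) < 2 * B / δbar := by positivity
  have hsx : (0:ℝ) < Real.sqrt (1 + 4 * δ * B / (y * δbar * μ)) + 1 := by positivity
  apply div_lt_div_of_pos_left hnum hsx
  have harg : 4 * δ * B / (y * δbar * μ) < 4 * δ * B / (x * δbar * μ) := by
    apply div_lt_div_of_pos_left (by positivity) (by positivity)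
    have := mul_pos hδbar hμ
    nlinarith
  have : Real.sqrt (1 + 4 * δ * B / (y * δbar * μ))
      < Real.sqrt (1 + 4 * δ * B / (x * δbar * μ)) := by
    apply Real.sqrt_lt_sqrt (by positivity)
    linarith
  linarith
end

section
/- Let F(b) = Δr · (-1 + sqrt(1 + 4δ(b̄ - b)/(n δ̄ μ)))/(2δ/(n μ)) + Δa · b with Δr > 0, Δa > 0, and positive constants δ, δ̄, μ, n, b̄. Then F'(b) = 0 if and only if b = b_a := b̄ + (n μ/(4 δ δ̄)) (δ̄² - (Δr/Δa)²), and F is increasing for b < b_a and decreasing for b > b_a. -/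
private lemma sign_aux (Δr Δa δbar S r d : ℝ) (hΔa : 0 < Δa) (hδbar : 0 < δbar)
    (hS : 0 < S) (hr : 0 < r) (hΔreq : Δr = r * (Δa * δbar)) (hd : S ^ 2 - r ^ 2 = d) :
    (0 < Δa - Δr / (δbar * S) ↔ 0 < d) ∧ (Δa - Δr / (δbar * S) < 0 ↔ d < 0) := by
  have key : Δa - Δr / (δbar * S) = Δa * (S - r) / S := by
    rw [hΔreq]; field_simp
  rw [key]
  constructor
  · rw [lt_div_iff₀ hS, zero_mul]
    constructor
    · intro h; nlinarith
    · intro h; nlinarith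
  · rw [div_lt_iff₀ hS, zero_mul]
    constructor
    · intro h; nlinarith
    · intro h; nlinarith

theorem stmt_3 (Δr Δa δ δbar μ n bbar : ℝ) (hΔr : 0 < Δr) (hΔa : 0 < Δa)
    (hδ : 0 < δ) (hδbar : 0 < δbar) (hμ : 0 < μ) (hn : 0 < n) (hb : 0 < bbar) :
    let F := fun b : ℝ =>
      Δr * ((-1 + Real.sqrt (1 + 4 * δ * (bbar - b) / (n * δbar * μ))) / (2 * δ / (n * μ)))
        + Δa * b
    let ba := bbar + (n * μ / (4 * δ * δbar)) * (δbar ^ 2 - (Δr / Δa) ^ 2)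
    (∀ b ∈ Set.Icc (0 : ℝ) bbar, (deriv F b = 0 ↔ b = ba)) ∧
    StrictMonoOn F (Set.Icc 0 bbar ∩ Set.Iic ba) ∧
    StrictAntiOn F (Set.Icc 0 bbar ∩ Set.Ici ba) := by
  intro F ba
  have hFdef : F = fun b : ℝ =>
      Δr * ((-1 + Real.sqrt (1 + 4 * δ * (bbar - b) / (n * δbar * μ))) / (2 * δ / (n * μ)))
        + Δa * b := rfl
  have hbadef : ba = bbar + (n * μ / (4 * δ * δbar)) * (δbar ^ 2 - (Δr / Δa) ^ 2) := rfl
  set r : ℝ := Δr / (Δa * δbar) with hr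
  have hrpos : 0 < r := by positivity
  have hΔreq : Δr = r * (Δa * δbar) := by
    rw [hr]; field_simp
  have hkey : ∀ b : ℝ, (1 + 4 * δ * (bbar - b) / (n * δbar * μ)) - r ^ 2
      = (4 * δ / (n * δbar * μ)) * (ba - b) := by
    intro b
    rw [hbadef, hr]
    field_simp
    ring
  have hcpos : (0:ℝ) < 4 * δ / (n * δbar * μ) := by positivity
  have hs1 : ∀ b : ℝ, b ≤ bbar → (1:ℝ) ≤ 1 + 4 * δ * (bbar - b) / (n * δbar * μ) := by
    intro b hble
    have h1 : 0 ≤ 4 * δ * (bbar - b) / (n * δbar * μ) := by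
      apply div_nonneg _ (by positivity)
      have : 0 ≤ bbar - b := by linarith
      positivity
    linarith
  have hsqrt_pos : ∀ b : ℝ, b ≤ bbar →
      0 < Real.sqrt (1 + 4 * δ * (bbar - b) / (n * δbar * μ)) := by
    intro b hble
    exact Real.sqrt_pos.mpr (by linarith [hs1 b hble])
  have hderiv : ∀ b : ℝ, b ≤ bbar →
      HasDerivAt F (Δa - Δr / (δbar * Real.sqrt (1 + 4 * δ * (bbar - b) / (n * δbar * μ)))) b := by
    intro b hble
    have hne : (1 + 4 * δ * (bbar - b) / (n * δbar * μ)) ≠ 0 := by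
      linarith [hs1 b hble]
    have h1 : HasDerivAt (fun x : ℝ => 1 + 4 * δ * (bbar - x) / (n * δbar * μ))
        (4 * δ * (-1) / (n * δbar * μ)) b := by
      have := ((((hasDerivAt_id b).const_sub bbar).const_mul (4 * δ)).div_const
        (n * δbar * μ)).const_add 1
      simpa using this
    have h2 : HasDerivAt (fun x : ℝ => Real.sqrt (1 + 4 * δ * (bbar - x) / (n * δbar * μ)))
        (1 / (2 * Real.sqrt (1 + 4 * δ * (bbar - b) / (n * δbar * μ)))
          * (4 * δ * (-1) / (n * δbar * μ))) b :=
      (Real.hasDerivAt_sqrt hne).comp b h1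
    have h3 := (((h2.const_add (-1)).div_const (2 * δ / (n * μ))).const_mul Δr).add
      ((hasDerivAt_id b).const_mul Δa)
    have hS := hsqrt_pos b hble
    set S := Real.sqrt (1 + 4 * δ * (bbar - b) / (n * δbar * μ)) with hSdef
    refine h3.congr_deriv ?_
    field_simp
    ring
  have hsign : ∀ b : ℝ, b ≤ bbar →
      ((0 < Δa - Δr / (δbar * Real.sqrt (1 + 4 * δ * (bbar - b) / (n * δbar * μ))) ↔ b < ba) ∧
       (Δa - Δr / (δbar * Real.sqrt (1 + 4 * δ * (bbar - b) / (n * δbar * μ))) < 0 ↔ ba < b)) := by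
    intro b hble
    have hS := hsqrt_pos b hble
    have hS2 : Real.sqrt (1 + 4 * δ * (bbar - b) / (n * δbar * μ)) ^ 2
        = 1 + 4 * δ * (bbar - b) / (n * δbar * μ) :=
      Real.sq_sqrt (by linarith [hs1 b hble])
    set S := Real.sqrt (1 + 4 * δ * (bbar - b) / (n * δbar * μ)) with hSdef
    have hd : S ^ 2 - r ^ 2 = (4 * δ / (n * δbar * μ)) * (ba - b) := by
      rw [hS2]; exact hkey b
    obtain ⟨h1, h2⟩ := sign_aux Δr Δa δbar S r _ hΔa hδbar hS hrpos hΔreq hd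
    constructor
    · rw [h1]
      constructor
      · intro h
        by_contra hc
        push_neg at hc
        have : 4 * δ / (n * δbar * μ) * (ba - b) ≤ 0 :=
          mul_nonpos_of_nonneg_of_nonpos hcpos.le (by linarith)
        linarith
      · intro h
        exact mul_pos hcpos (by linarith)
    · rw [h2]
      constructor
      · intro h
        by_contra hc
        push_neg at hc
        have : 0 ≤ 4 * δ / (n * δbar * μ) * (ba - b) :=
          mul_nonneg hcpos.le (by linarith)
        linarith
      · intro h
        exact mul_neg_of_pos_of_neg hcpos (by linarith)
  have hFcont : Continuous F := by
    rw [hFdef]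
    fun_prop
  refine ⟨?_, ?_, ?_⟩
  · intro b hbmem
    have hble : b ≤ bbar := hbmem.2
    rw [(hderiv b hble).deriv]
    obtain ⟨h1, h2⟩ := hsign b hble
    constructor
    · intro h
      by_contra hne
      rcases lt_or_gt_of_ne hne with hlt | hgt
      · have := h1.mpr hlt; linarith
      · have := h2.mpr hgt; linarith
    · intro h
      by_contra hne
      rcases lt_or_gt_of_ne hne with hlt | hgt
      · have := h2.mp hlt; rw [h] at this; linarith
      · have := h1.mp hgt; rw [h] at this; linarith
  · apply strictMonoOn_of_deriv_pos ((convex_Icc 0 bbar).inter (convex_Iic ba))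
      (hFcont.continuousOn)
    intro x hx
    rw [interior_inter, interior_Icc, interior_Iic] at hx
    have hxle : x ≤ bbar := hx.1.2.le
    rw [(hderiv x hxle).deriv]
    exact (hsign x hxle).1.mpr hx.2
  · apply strictAntiOn_of_deriv_neg ((convex_Icc 0 bbar).inter (convex_Ici ba))
      (hFcont.continuousOn)
    intro x hx
    rw [interior_inter, interior_Icc, interior_Ici] at hx
    have hxle : x ≤ bbar := hx.1.2.le
    rw [(hderiv x hxle).deriv]
    exact (hsign x hxle).2.mpr hx.2
end

section
/- With F as above and Δr > 0, Δa > 0, the global maximizer of F over [0, b̄] is b* = b̄ if Δr/Δa ≤ δ̄, b* = b_a if δ̄ ≤ Δr/Δa ≤ δ̄·sqrt(1 + 4b̄δ/(n δ̄ μ)), and b* = 0 if Δr/Δa ≥ δ̄·sqrt(1 + 4b̄δ/(n δ̄ μ)), where b_a = b̄ + (n μ/(4δδ̄))(δ̄² - (Δr/Δa)²). -/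
lemma stmt4_reduce (Δr Δa δ δbar μ n bbar x y : ℝ)
    (hδ : 0 < δ) (hμ : 0 < μ) (hn : 0 < n)
    (hkey : n * μ * (Δr * (Real.sqrt (1 + 4 * δ * (bbar - x) / (n * δbar * μ)) -
        Real.sqrt (1 + 4 * δ * (bbar - y) / (n * δbar * μ)))) ≤ 2 * δ * (Δa * (y - x))) :
    Δr * ((-1 + Real.sqrt (1 + 4 * δ * (bbar - x) / (n * δbar * μ))) / (2 * δ / (n * μ))) + Δa * x ≤
    Δr * ((-1 + Real.sqrt (1 + 4 * δ * (bbar - y) / (n * δbar * μ))) / (2 * δ / (n * μ))) + Δa * y := by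
  set A := Real.sqrt (1 + 4 * δ * (bbar - x) / (n * δbar * μ)) with hA
  set B := Real.sqrt (1 + 4 * δ * (bbar - y) / (n * δbar * μ)) with hB
  have hnμ : 0 < n * μ := by positivity
  have hc : 0 < 2 * δ / (n * μ) := by positivity
  have h1 : Δr * (A - B) / (2 * δ / (n * μ)) ≤ Δa * (y - x) := by
    rw [div_le_iff₀ hc]
    have e : Δa * (y - x) * (2 * δ / (n * μ)) = 2 * δ * (Δa * (y - x)) / (n * μ) := by ring
    rw [e, le_div_iff₀ hnμ]
    linarith
  have e2 : Δr * ((-1 + A) / (2 * δ / (n * μ))) + Δa * x -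
      (Δr * ((-1 + B) / (2 * δ / (n * μ))) + Δa * y) =
      Δr * (A - B) / (2 * δ / (n * μ)) - Δa * (y - x) := by ring
  linarith

theorem stmt_4 (Δr Δa δ δbar μ n bbar : ℝ) (hΔr : 0 < Δr) (hΔa : 0 < Δa)
    (hδ : 0 < δ) (hδbar : 0 < δbar) (hμ : 0 < μ) (hn : 0 < n) (hb : 0 < bbar) :
    let F := fun b : ℝ =>
      Δr * ((-1 + Real.sqrt (1 + 4 * δ * (bbar - b) / (n * δbar * μ))) / (2 * δ / (n * μ)))
        + Δa * b
    let ba := bbar + (n * μ / (4 * δ * δbar)) * (δbar ^ 2 - (Δr / Δa) ^ 2)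
    (Δr / Δa ≤ δbar → IsMaxOn F (Set.Icc 0 bbar) bbar) ∧
    (δbar ≤ Δr / Δa ∧ Δr / Δa ≤ δbar * Real.sqrt (1 + 4 * bbar * δ / (n * δbar * μ)) →
      IsMaxOn F (Set.Icc 0 bbar) ba) ∧
    (δbar * Real.sqrt (1 + 4 * bbar * δ / (n * δbar * μ)) ≤ Δr / Δa →
      IsMaxOn F (Set.Icc 0 bbar) 0) := by
  intro F ba
  have hnδμ : (0:ℝ) < n * δbar * μ := by positivity
  -- generic facts about s x for x ∈ [0, bbar]
  have hargnn : ∀ x : ℝ, x ≤ bbar → (0:ℝ) ≤ 1 + 4 * δ * (bbar - x) / (n * δbar * μ) := by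
    intro x hx
    have : 0 ≤ 4 * δ * (bbar - x) / (n * δbar * μ) := by
      apply div_nonneg _ hnδμ.le; nlinarith
    linarith
  have hpoly : ∀ x : ℝ, x ≤ bbar →
      n * δbar * μ * (Real.sqrt (1 + 4 * δ * (bbar - x) / (n * δbar * μ))) ^ 2 =
        n * δbar * μ + 4 * δ * (bbar - x) := by
    intro x hx
    rw [Real.sq_sqrt (hargnn x hx)]
    field_simp
  have hone : ∀ x : ℝ, x ≤ bbar →
      1 ≤ Real.sqrt (1 + 4 * δ * (bbar - x) / (n * δbar * μ)) := by
    intro x hx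
    have h0 : 0 ≤ 4 * δ * (bbar - x) / (n * δbar * μ) := by
      apply div_nonneg _ hnδμ.le; nlinarith
    calc (1:ℝ) = Real.sqrt 1 := by simp
      _ ≤ _ := Real.sqrt_le_sqrt (by linarith)
  refine ⟨?_, ?_, ?_⟩
  · -- case 1 : b* = bbar
    intro hcase x hx
    obtain ⟨hx0, hx1⟩ := hx
    have h1 : Δr ≤ Δa * δbar := by
      rw [div_le_iff₀ hΔa] at hcase; linarith
    simp only [F, Set.mem_setOf_eq]
    apply stmt4_reduce _ _ _ _ _ _ _ _ _ hδ hμ hn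
    have hsB : Real.sqrt (1 + 4 * δ * (bbar - bbar) / (n * δbar * μ)) = 1 := by
      simp
    rw [hsB]
    set A := Real.sqrt (1 + 4 * δ * (bbar - x) / (n * δbar * μ)) with hA
    have hpx := hpoly x hx1
    have hA1 := hone x hx1
    rw [← hA] at hpx
    nlinarith [mul_nonneg (mul_nonneg (mul_nonneg hn.le hμ.le) (by linarith : (0:ℝ) ≤ Δa * δbar - Δr)) (by linarith : (0:ℝ) ≤ A - 1),
      mul_nonneg (mul_nonneg (mul_nonneg (mul_nonneg hn.le hμ.le) hΔa.le) hδbar.le) (sq_nonneg (A - 1))]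
  · -- case 2 : b* = ba
    rintro ⟨h1, h2⟩ x hx
    obtain ⟨hx0, hx1⟩ := hx
    simp only [F, Set.mem_setOf_eq]
    apply stmt4_reduce _ _ _ _ _ _ _ _ _ hδ hμ hn
    have hargba : 1 + 4 * δ * (bbar - ba) / (n * δbar * μ) = (Δr / (Δa * δbar)) ^ 2 := by
      simp only [ba]
      field_simp
      ring
    have hsba : Real.sqrt (1 + 4 * δ * (bbar - ba) / (n * δbar * μ)) = Δr / (Δa * δbar) := by
      rw [hargba, Real.sqrt_sq (by positivity)]
    clear_value ba
    set B := Real.sqrt (1 + 4 * δ * (bbar - ba) / (n * δbar * μ)) with hB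
    have hkeyB : Δa * δbar * B = Δr := by
      rw [hsba]; field_simp
    have hpy : n * δbar * μ * B ^ 2 = n * δbar * μ + 4 * δ * (bbar - ba) := by
      rw [hB, Real.sq_sqrt (by rw [hargba]; positivity)]
      field_simp
    set A := Real.sqrt (1 + 4 * δ * (bbar - x) / (n * δbar * μ)) with hA
    have hpx := hpoly x hx1
    rw [← hA] at hpx
    have hd2 : Δa * (n * δbar * μ * (A ^ 2 - B ^ 2)) = Δa * (4 * δ * (ba - x)) := by
      have hd : n * δbar * μ * (A ^ 2 - B ^ 2) = 4 * δ * (ba - x) := by linarith [hpx, hpy]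
      rw [hd]
    rw [← hkeyB]
    nlinarith [hd2, mul_nonneg (mul_nonneg (mul_nonneg (mul_nonneg hn.le hμ.le) hΔa.le) hδbar.le) (sq_nonneg (A - B))]
  · -- case 3 : b* = 0
    intro hcase x hx
    obtain ⟨hx0, hx1⟩ := hx
    simp only [F, Set.mem_setOf_eq]
    apply stmt4_reduce _ _ _ _ _ _ _ _ _ hδ hμ hn
    have hsame : 1 + 4 * δ * (bbar - 0) / (n * δbar * μ) = 1 + 4 * bbar * δ / (n * δbar * μ) := by
      ring_nf
    set B := Real.sqrt (1 + 4 * δ * (bbar - 0) / (n * δbar * μ)) with hB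
    set A := Real.sqrt (1 + 4 * δ * (bbar - x) / (n * δbar * μ)) with hA
    have h1 : Δa * (δbar * B) ≤ Δr := by
      rw [hB, hsame]
      rw [le_div_iff₀ hΔa] at hcase
      linarith
    have hAB : A ≤ B := by
      rw [hA, hB]
      apply Real.sqrt_le_sqrt
      gcongr
    have hpx := hpoly x hx1
    have hpy := hpoly 0 hb.le
    rw [← hA] at hpx
    rw [← hB] at hpy
    have hd2 : Δa * (n * δbar * μ * (A ^ 2 - B ^ 2)) = Δa * (4 * δ * (0 - x)) := by
      have hd : n * δbar * μ * (A ^ 2 - B ^ 2) = 4 * δ * (0 - x) := by linarith [hpx, hpy]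
      rw [hd]
    nlinarith [hd2, mul_nonneg (mul_nonneg (mul_nonneg hn.le hμ.le) (by linarith : (0:ℝ) ≤ Δr - Δa * (δbar * B))) (by linarith : (0:ℝ) ≤ B - A),
      mul_nonneg (mul_nonneg (mul_nonneg (mul_nonneg hn.le hμ.le) hΔa.le) hδbar.le) (sq_nonneg (B - A))]
end

section
/- Let Δr < 0, Δa < 0 and F(b) = Δr·(-1 + sqrt(1 + 4δ(b̄-b)/(δ̄ μ)))/(2δ/μ) + Δa·b on [0, b̄] (n = 1). Then max_{b∈[0,b̄]} F(b) = max{F(0), F(b̄)}; moreover F(0) ≥ F(b̄) if and only if Δr/Δa ≤ (2δ b̄/μ)/(-1 + sqrt(1 + 4δ b̄/(δ̄ μ))). -/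
theorem stmt_5 (Δr Δa δ δbar μ bbar : ℝ) (hΔr : Δr < 0) (hΔa : Δa < 0)
    (hδ : 0 < δ) (hδbar : 0 < δbar) (hμ : 0 < μ) (hb : 0 < bbar) :
    let F := fun b : ℝ =>
      Δr * ((-1 + Real.sqrt (1 + 4 * δ * (bbar - b) / (δbar * μ))) / (2 * δ / μ)) + Δa * b
    (∀ b ∈ Set.Icc (0 : ℝ) bbar, F b ≤ max (F 0) (F bbar)) ∧
    (F bbar ≤ F 0 ↔
      Δr / Δa ≤ (2 * δ * bbar / μ) / (-1 + Real.sqrt (1 + 4 * δ * bbar / (δbar * μ)))) := by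
  intro F
  set S := Real.sqrt (1 + 4 * δ * bbar / (δbar * μ)) with hSdef
  have harg : (0:ℝ) ≤ 1 + 4 * δ * bbar / (δbar * μ) := by positivity
  have hS2 : S ^ 2 = 1 + 4 * δ * bbar / (δbar * μ) := Real.sq_sqrt harg
  have hS1 : 1 < S := by
    have h0 : 0 ≤ S := Real.sqrt_nonneg _
    have h2 : 0 < 4 * δ * bbar / (δbar * μ) := by positivity
    nlinarith [hS2]
  have hq : (0:ℝ) < 2 * δ / μ := by positivity
  have hFbbar : F bbar = Δa * bbar := by
    simp [F, sub_self]
  have hF0 : F 0 = Δr * ((-1 + S) / (2 * δ / μ)) := by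
    simp [F, hSdef]
  constructor
  · intro b hbmem
    obtain ⟨hb0, hbB⟩ := hbmem
    set s := Real.sqrt (1 + 4 * δ * (bbar - b) / (δbar * μ)) with hsdef
    have hconv0 : 0 ≤ (bbar - b) * S + b := by nlinarith
    have hargb : (0:ℝ) ≤ 1 + 4 * δ * (bbar - b) / (δbar * μ) := by
      have h2 : (0:ℝ) ≤ 4 * δ * (bbar - b) / (δbar * μ) :=
        div_nonneg (by nlinarith) (by positivity)
      linarith
    have hkey : ((bbar - b) * S + b) / bbar ≤ s := by
      rw [hsdef, Real.le_sqrt (by positivity) hargb, div_pow,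
        div_le_iff₀ (by positivity : (0:ℝ) < bbar ^ 2)]
      have h1 : 0 ≤ b * (bbar - b) := mul_nonneg hb0 (by linarith)
      have hid : (1 + 4 * δ * (bbar - b) / (δbar * μ)) * bbar ^ 2
          - ((bbar - b) * S + b) ^ 2 = b * (bbar - b) * (S - 1) ^ 2 := by
        linear_combination (-(bbar - b) ^ 2 - b * (bbar - b)) * hS2
      nlinarith [hid, mul_nonneg h1 (sq_nonneg (S - 1))]
    have h1 : Δr * ((-1 + s) / (2 * δ / μ)) ≤
        Δr * ((-1 + ((bbar - b) * S + b) / bbar) / (2 * δ / μ)) := by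
      rw [mul_div_assoc', mul_div_assoc']
      exact (div_le_div_iff_of_pos_right hq).mpr (mul_le_mul_of_nonpos_left (by linarith) hΔr.le)
    have heq : Δr * ((-1 + ((bbar - b) * S + b) / bbar) / (2 * δ / μ)) + Δa * b
        = (1 - b / bbar) * F 0 + (b / bbar) * F bbar := by
      rw [hF0, hFbbar]
      field_simp
      ring
    have ht0 : 0 ≤ b / bbar := by positivity
    have ht1 : b / bbar ≤ 1 := by rw [div_le_one hb]; exact hbB
    have hm1 := le_max_left (F 0) (F bbar)
    have hm2 := le_max_right (F 0) (F bbar)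
    calc F b = Δr * ((-1 + s) / (2 * δ / μ)) + Δa * b := rfl
      _ ≤ Δr * ((-1 + ((bbar - b) * S + b) / bbar) / (2 * δ / μ)) + Δa * b := by linarith
      _ = (1 - b / bbar) * F 0 + (b / bbar) * F bbar := heq
      _ ≤ max (F 0) (F bbar) := by
          nlinarith [mul_le_mul_of_nonneg_left hm1 (by linarith : 0 ≤ 1 - b / bbar),
            mul_le_mul_of_nonneg_left hm2 ht0]
  · rw [hF0, hFbbar]
    rw [le_div_iff₀ (by linarith : (0:ℝ) < -1 + S), div_mul_eq_mul_div,
      div_le_iff_of_neg hΔa, mul_div_assoc', le_div_iff₀ hq]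
    rw [show 2 * δ * bbar / μ * Δa = Δa * bbar * (2 * δ / μ) from by ring]
end

section
/- Define D_s(c) = (-(1 + ξc) + sqrt((1 + ξc)² + K))/(2δ/(nμ)) for c ≥ 0, where ξ, δ, n, μ > 0 and K = 4δb̄/(n δ̄ μ) > 0. Then D_s is strictly decreasing in c, and -D_s'(c)/D_s(c) = ξ / sqrt((1+ξc)² + K). -/
private lemma key_deriv (ξ K A : ℝ) (hK : 0 < K) (c : ℝ) :
    HasDerivAt (fun c : ℝ => (-(1 + ξ * c) + Real.sqrt ((1 + ξ * c) ^ 2 + K)) / A)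
      ((-ξ + (2 * (1 + ξ * c) * ξ) / (2 * Real.sqrt ((1 + ξ * c) ^ 2 + K))) / A) c := by
  have hu : HasDerivAt (fun c : ℝ => 1 + ξ * c) ξ c := by
    simpa using ((hasDerivAt_id c).const_mul ξ).const_add 1
  have h2 : HasDerivAt (fun c : ℝ => (1 + ξ * c) ^ 2 + K) (2 * (1 + ξ * c) * ξ) c := by
    have := (hu.pow 2).add_const K
    norm_num at this
    simpa using this
  have hne : (1 + ξ * c) ^ 2 + K ≠ 0 := by positivity
  exact ((hu.neg).add (h2.sqrt hne)).div_const A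

private lemma key_lt (ξ K : ℝ) (hK : 0 < K) (c : ℝ) :
    1 + ξ * c < Real.sqrt ((1 + ξ * c) ^ 2 + K) := by
  calc 1 + ξ * c ≤ |1 + ξ * c| := le_abs_self _
    _ = Real.sqrt ((1 + ξ * c) ^ 2) := (Real.sqrt_sq_eq_abs _).symm
    _ < Real.sqrt ((1 + ξ * c) ^ 2 + K) := Real.sqrt_lt_sqrt (by positivity) (by linarith)

private lemma key (ξ K A : ℝ) (hξ : 0 < ξ) (hK : 0 < K) (hA : 0 < A) :
    StrictAntiOn (fun c : ℝ => (-(1 + ξ * c) + Real.sqrt ((1 + ξ * c) ^ 2 + K)) / A)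
      (Set.Ici 0) ∧
    ∀ c ≥ (0 : ℝ),
      -(deriv (fun c : ℝ => (-(1 + ξ * c) + Real.sqrt ((1 + ξ * c) ^ 2 + K)) / A) c) /
          ((-(1 + ξ * c) + Real.sqrt ((1 + ξ * c) ^ 2 + K)) / A)
        = ξ / Real.sqrt ((1 + ξ * c) ^ 2 + K) := by
  have hderivneg : ∀ c : ℝ,
      (-ξ + (2 * (1 + ξ * c) * ξ) / (2 * Real.sqrt ((1 + ξ * c) ^ 2 + K))) / A < 0 := by
    intro c
    have hs : 0 < Real.sqrt ((1 + ξ * c) ^ 2 + K) := Real.sqrt_pos.2 (by positivity)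
    have hlt := key_lt ξ K hK c
    have h1 : (2 * (1 + ξ * c) * ξ) / (2 * Real.sqrt ((1 + ξ * c) ^ 2 + K)) < ξ := by
      rw [div_lt_iff₀ (by positivity)]
      nlinarith
    exact div_neg_of_neg_of_pos (by linarith) hA
  constructor
  · apply strictAntiOn_of_deriv_neg (convex_Ici 0)
    · exact (Differentiable.continuous fun c => (key_deriv ξ K A hK c).differentiableAt).continuousOn
    · intro x _
      rw [(key_deriv ξ K A hK x).deriv]
      exact hderivneg x
  · intro c _
    have hs : 0 < Real.sqrt ((1 + ξ * c) ^ 2 + K) := Real.sqrt_pos.2 (by positivity)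
    have hlt := key_lt ξ K hK c
    have hne : -(1 + ξ * c) + Real.sqrt ((1 + ξ * c) ^ 2 + K) ≠ 0 := by
      have : 0 < -(1 + ξ * c) + Real.sqrt ((1 + ξ * c) ^ 2 + K) := by linarith
      exact ne_of_gt this
    rw [(key_deriv ξ K A hK c).deriv]
    generalize hsd : Real.sqrt ((1 + ξ * c) ^ 2 + K) = s at hs hne ⊢
    generalize hud : 1 + ξ * c = u at hne ⊢
    have hne' : s - u ≠ 0 := by
      intro h; apply hne; linarith [sub_eq_zero.mp h]
    field_simp [hA.ne', hs.ne']
    ring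

theorem stmt_6 (ξ δ n μ δbar bbar : ℝ) (hξ : 0 < ξ) (hδ : 0 < δ) (hn : 0 < n)
    (hμ : 0 < μ) (hδbar : 0 < δbar) (hb : 0 < bbar) :
    let K := 4 * δ * bbar / (n * δbar * μ)
    let Ds := fun c : ℝ => (-(1 + ξ * c) + Real.sqrt ((1 + ξ * c) ^ 2 + K)) / (2 * δ / (n * μ))
    StrictAntiOn Ds (Set.Ici 0) ∧
    ∀ c ≥ (0 : ℝ), -(deriv Ds c) / Ds c = ξ / Real.sqrt ((1 + ξ * c) ^ 2 + K) := by
  intro K Ds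
  have hK : 0 < K := by positivity
  have hA : 0 < 2 * δ / (n * μ) := by positivity
  exact key ξ K (2 * δ / (n * μ)) hξ hK hA
end

section
/- Let G(c) = (Δr + ξΔs·c)·D_s(c) with Δr ≤ 0, Δs ≥ 0 (not both zero), ξ > 0, and D_s(c) = (-(1+ξc)+sqrt((1+ξc)²+K))/A with K, A > 0. Then G'(c) ≥ 0 for all c ≥ 0, i.e., G is nondecreasing on [0, ∞), so the maximum over [0, c̄] is attained at c = c̄. -/
private lemma aux_key (Δr Δs ξ K A : ℝ) (hξ : 0 < ξ) (hK : 0 < K) (hA : 0 < A) (c : ℝ) :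
    HasDerivAt (fun c : ℝ => (Δr + ξ * Δs * c) *
        ((-(1 + ξ * c) + Real.sqrt ((1 + ξ * c) ^ 2 + K)) / A))
      (ξ * Δs * ((-(1 + ξ * c) + Real.sqrt ((1 + ξ * c) ^ 2 + K)) / A) +
        (Δr + ξ * Δs * c) *
          ((-ξ + 2 * (1 + ξ * c) * ξ / (2 * Real.sqrt ((1 + ξ * c) ^ 2 + K))) / A)) c := by
  have h1 : HasDerivAt (fun c : ℝ => 1 + ξ * c) ξ c := by
    simpa using ((hasDerivAt_id c).const_mul ξ).const_add (1 : ℝ)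
  have h2 : HasDerivAt (fun c : ℝ => (1 + ξ * c) ^ 2 + K) (2 * (1 + ξ * c) * ξ) c := by
    have := (h1.pow 2).add_const K
    simpa [mul_comm, mul_assoc, mul_left_comm] using this
  have hpos : (0 : ℝ) < (1 + ξ * c) ^ 2 + K := by positivity
  have h3 : HasDerivAt (fun c : ℝ => Real.sqrt ((1 + ξ * c) ^ 2 + K))
      (2 * (1 + ξ * c) * ξ / (2 * Real.sqrt ((1 + ξ * c) ^ 2 + K))) c := h2.sqrt hpos.ne'
  have h4 : HasDerivAt (fun c : ℝ => (-(1 + ξ * c) + Real.sqrt ((1 + ξ * c) ^ 2 + K)) / A)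
      ((-ξ + 2 * (1 + ξ * c) * ξ / (2 * Real.sqrt ((1 + ξ * c) ^ 2 + K))) / A) c :=
    ((h1.neg).add h3).div_const A
  have h5 : HasDerivAt (fun c : ℝ => Δr + ξ * Δs * c) (ξ * Δs) c := by
    simpa using ((hasDerivAt_id c).const_mul (ξ * Δs)).const_add Δr
  exact h5.mul h4

private lemma aux_main (Δr Δs ξ K A cbar : ℝ) (hΔr : Δr ≤ 0) (hΔs : 0 ≤ Δs)
    (hξ : 0 < ξ) (hK : 0 < K) (hA : 0 < A) (hc : 0 ≤ cbar) :
    (∀ c ≥ (0 : ℝ), 0 ≤ deriv (fun c : ℝ => (Δr + ξ * Δs * c) *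
        ((-(1 + ξ * c) + Real.sqrt ((1 + ξ * c) ^ 2 + K)) / A)) c) ∧
      IsMaxOn (fun c : ℝ => (Δr + ξ * Δs * c) *
        ((-(1 + ξ * c) + Real.sqrt ((1 + ξ * c) ^ 2 + K)) / A)) (Set.Icc 0 cbar) cbar := by
  set G : ℝ → ℝ := fun c : ℝ => (Δr + ξ * Δs * c) *
      ((-(1 + ξ * c) + Real.sqrt ((1 + ξ * c) ^ 2 + K)) / A) with hG
  have hnn : ∀ c : ℝ, 0 ≤ c → 0 ≤ deriv G c := by
    intro c hc0
    have key := aux_key Δr Δs ξ K A hξ hK hA c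
    rw [key.deriv]
    set u : ℝ := 1 + ξ * c with hu
    set s : ℝ := Real.sqrt (u ^ 2 + K) with hs
    have hupos : 0 < u := by have : 0 ≤ ξ * c := by positivity
                             simp only [hu]; linarith
    have hspos : 0 < s := Real.sqrt_pos.mpr (by positivity)
    have hus : u ≤ s := by
      have : u = Real.sqrt (u ^ 2) := by
        rw [Real.sqrt_sq hupos.le]
      rw [this]
      exact Real.sqrt_le_sqrt (by linarith)
    have heq : ξ * Δs * ((-u + s) / A) + (Δr + ξ * Δs * c) * ((-ξ + 2 * u * ξ / (2 * s)) / A)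
        = ξ * (s - u) * (Δs * s - (Δr + ξ * Δs * c)) / (A * s) := by
      field_simp
      ring
    rw [heq]
    apply div_nonneg _ (by positivity)
    have hbr : 0 ≤ Δs * s - (Δr + ξ * Δs * c) := by
      have h1 : Δs * u ≤ Δs * s := mul_le_mul_of_nonneg_left hus hΔs
      have : Δs * u = Δs + ξ * Δs * c := by rw [hu]; ring
      nlinarith
    have := mul_nonneg (mul_nonneg hξ.le (by linarith : (0:ℝ) ≤ s - u)) hbr
    linarith
  have hdiff : Differentiable ℝ G := fun c => (aux_key Δr Δs ξ K A hξ hK hA c).differentiableAt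
  have mono : MonotoneOn G (Set.Icc 0 cbar) := by
    apply monotoneOn_of_deriv_nonneg (convex_Icc 0 cbar) hdiff.continuous.continuousOn
      (hdiff.differentiableOn.mono interior_subset)
    intro x hx
    rw [interior_Icc] at hx
    exact hnn x hx.1.le
  refine ⟨fun c hc0 => hnn c hc0, ?_⟩
  intro x hx
  exact mono hx (Set.right_mem_Icc.mpr hc) hx.2

theorem stmt_9 (Δr Δs ξ K A cbar : ℝ) (hΔr : Δr ≤ 0) (hΔs : 0 ≤ Δs)
    (hne : ¬(Δr = 0 ∧ Δs = 0)) (hξ : 0 < ξ) (hK : 0 < K) (hA : 0 < A) (hc : 0 ≤ cbar) :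
    let Ds := fun c : ℝ => (-(1 + ξ * c) + Real.sqrt ((1 + ξ * c) ^ 2 + K)) / A
    let G := fun c : ℝ => (Δr + ξ * Δs * c) * Ds c
    (∀ c ≥ (0 : ℝ), 0 ≤ deriv G c) ∧ IsMaxOn G (Set.Icc 0 cbar) cbar := by
  intro Ds G
  exact aux_main Δr Δs ξ K A cbar hΔr hΔs hξ hK hA hc
end

section
/- Let G(c) = (Δr + ξΔs·c)·D_s(c) with Δr ≥ 0, Δs ≤ 0 (not both zero), ξ > 0, and D_s(c) = (-(1+ξc)+sqrt((1+ξc)²+K))/A with K, A > 0. Then G'(c) ≤ 0 for all c ≥ 0, so the maximum of G over [0, c̄] is attained at c = 0. -/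
theorem stmt_10 (Δr Δs ξ K A cbar : ℝ) (hΔr : 0 ≤ Δr) (hΔs : Δs ≤ 0)
    (hne : ¬(Δr = 0 ∧ Δs = 0)) (hξ : 0 < ξ) (hK : 0 < K) (hA : 0 < A) (hc : 0 ≤ cbar) :
    let Ds := fun c : ℝ => (-(1 + ξ * c) + Real.sqrt ((1 + ξ * c) ^ 2 + K)) / A
    let G := fun c : ℝ => (Δr + ξ * Δs * c) * Ds c
    (∀ c ≥ (0 : ℝ), deriv G c ≤ 0) ∧ IsMaxOn G (Set.Icc 0 cbar) 0 := by
  intro Ds G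
  -- derivative formula
  have hG : ∀ c : ℝ, HasDerivAt G
      (ξ * Δs * Ds c + (Δr + ξ * Δs * c) *
        ((-ξ + (1 / (2 * Real.sqrt ((1 + ξ * c) ^ 2 + K))) * (2 * (1 + ξ * c) * ξ)) / A)) c := by
    intro c
    have hq : (0:ℝ) < (1 + ξ * c) ^ 2 + K := by positivity
    have h1 : HasDerivAt (fun c : ℝ => (1 + ξ * c) ^ 2 + K) (2 * (1 + ξ * c) * ξ) c := by
      have h0 : HasDerivAt (fun c : ℝ => 1 + ξ * c) ξ c := by
        simpa using ((hasDerivAt_id c).const_mul ξ).const_add 1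
      have := (h0.pow 2).add_const K
      exact this.congr_deriv (by push_cast; ring)
    have hs : HasDerivAt (fun c : ℝ => Real.sqrt ((1 + ξ * c) ^ 2 + K))
        ((1 / (2 * Real.sqrt ((1 + ξ * c) ^ 2 + K))) * (2 * (1 + ξ * c) * ξ)) c :=
      (Real.hasDerivAt_sqrt (ne_of_gt hq)).comp c h1
    have hDs : HasDerivAt Ds
        ((-ξ + (1 / (2 * Real.sqrt ((1 + ξ * c) ^ 2 + K))) * (2 * (1 + ξ * c) * ξ)) / A) c := by
      have h0 : HasDerivAt (fun c : ℝ => -(1 + ξ * c)) (-ξ) c := by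
        simpa using ((hasDerivAt_id c).const_mul (-ξ))
      exact ((h0.add hs).div_const A)
    have hlin : HasDerivAt (fun c : ℝ => Δr + ξ * Δs * c) (ξ * Δs) c := by
      simpa using ((hasDerivAt_id c).const_mul (ξ * Δs)).const_add Δr
    exact hlin.mul hDs
  -- deriv nonpos for c ≥ 0
  have hkey : ∀ c ≥ (0:ℝ), deriv G c ≤ 0 := by
    intro c hc0
    rw [(hG c).deriv]
    set u : ℝ := 1 + ξ * c with hu
    have hq : (0:ℝ) < u ^ 2 + K := by positivity
    set s : ℝ := Real.sqrt (u ^ 2 + K) with hsdef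
    have hs0 : 0 < s := Real.sqrt_pos.mpr hq
    have hs2 : s ^ 2 = u ^ 2 + K := Real.sq_sqrt hq.le
    have hu0 : 0 < u := by have : 0 ≤ ξ * c := mul_nonneg hξ.le hc0; simp [hu]; linarith
    have hus : u ≤ s := by
      rw [hsdef]
      nlinarith [Real.sq_sqrt hq.le, Real.sqrt_nonneg (u ^ 2 + K)]
    have hus' : u < s := by
      rcases lt_or_eq_of_le hus with h | h
      · exact h
      · exfalso; nlinarith
    -- Ds' ≤ 0
    have hDs' : (-ξ + (1 / (2 * s)) * (2 * u * ξ)) / A ≤ 0 := by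
      apply div_nonpos_of_nonpos_of_nonneg _ hA.le
      have : (1 / (2 * s)) * (2 * u * ξ) = ξ * (u / s) := by field_simp
      rw [this]
      have : u / s ≤ 1 := (div_le_one hs0).mpr hus
      nlinarith
    -- Ds c + c * Ds' ≥ 0
    have hDsc : 0 ≤ Ds c + c * ((-ξ + (1 / (2 * s)) * (2 * u * ξ)) / A) := by
      have hnum : 0 ≤ u ^ 2 + ξ * c * u + K - (u + ξ * c) * s := by
        have h1 : 0 < u ^ 2 + ξ * c * u + K := by nlinarith [mul_nonneg (mul_nonneg hξ.le hc0) hu0.le]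
        nlinarith [sq_nonneg (u ^ 2 + ξ * c * u + K - (u + ξ * c) * s),
          mul_nonneg (mul_nonneg hξ.le hc0) hu0.le, hK, mul_nonneg hξ.le hc0]
      have : Ds c + c * ((-ξ + (1 / (2 * s)) * (2 * u * ξ)) / A)
          = (u ^ 2 + ξ * c * u + K - (u + ξ * c) * s) / (A * s) := by
        show (-u + s) / A + _ = _
        field_simp
        linear_combination hs2
      rw [this]
      positivity
    -- combine
    have h1 : Δr * ((-ξ + (1 / (2 * s)) * (2 * u * ξ)) / A) ≤ 0 :=
      mul_nonpos_of_nonneg_of_nonpos hΔr hDs'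
    have h2 : ξ * Δs * (Ds c + c * ((-ξ + (1 / (2 * s)) * (2 * u * ξ)) / A)) ≤ 0 :=
      mul_nonpos_of_nonpos_of_nonneg (mul_nonpos_of_nonneg_of_nonpos hξ.le hΔs) hDsc
    nlinarith [h1, h2]
  refine ⟨hkey, ?_⟩
  have hanti : AntitoneOn G (Set.Icc 0 cbar) := by
    apply antitoneOn_of_deriv_nonpos (convex_Icc 0 cbar)
    · exact fun x _ => ((hG x).differentiableAt).continuousAt.continuousWithinAt
    · intro x hx
      exact ((hG x).differentiableAt).differentiableWithinAt
    · intro x hx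
      rw [interior_Icc] at hx
      exact hkey x hx.1.le
  intro x hx
  exact hanti (Set.left_mem_Icc.mpr hc) hx hx.1
end

section
/- Let Δr > 0, Δs > 0, ξ > 0, K > 0, and G(c) = (Δr + ξΔs c)·(-(1+ξc)+sqrt((1+ξc)²+K)). Then G'(0) ≥ 0 if and only if Δr/Δs ≤ sqrt(1 + K), and G'(c̄) ≥ 0 if and only if Δr/Δs ≤ sqrt((1+ξc̄)² + K) - ξc̄. -/
theorem stmt_11 (Δr Δs ξ K cbar : ℝ) (hΔr : 0 < Δr) (hΔs : 0 < Δs)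
    (hξ : 0 < ξ) (hK : 0 < K) (hc : 0 ≤ cbar) :
    let G := fun c : ℝ =>
      (Δr + ξ * Δs * c) * (-(1 + ξ * c) + Real.sqrt ((1 + ξ * c) ^ 2 + K))
    (0 ≤ deriv G 0 ↔ Δr / Δs ≤ Real.sqrt (1 + K)) ∧
    (0 ≤ deriv G cbar ↔ Δr / Δs ≤ Real.sqrt ((1 + ξ * cbar) ^ 2 + K) - ξ * cbar) := by
  intro G
  have key : ∀ c : ℝ, 0 ≤ c →
      (0 ≤ deriv G c ↔ Δr / Δs ≤ Real.sqrt ((1 + ξ * c) ^ 2 + K) - ξ * c) := by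
    intro c hc0
    have hu0 : 0 < 1 + ξ * c := by positivity
    set u : ℝ := 1 + ξ * c with hu
    have harg : 0 < u ^ 2 + K := by positivity
    set S : ℝ := Real.sqrt (u ^ 2 + K) with hS
    have hS0 : 0 < S := Real.sqrt_pos.2 harg
    have hS2 : S ^ 2 = u ^ 2 + K := Real.sq_sqrt harg.le
    have hSu : u < S := by nlinarith
    have h1 : HasDerivAt (fun x : ℝ => (1 + ξ * x) ^ 2 + K) (2 * u * ξ) c := by
      have hlin : HasDerivAt (fun x : ℝ => 1 + ξ * x) ξ c := by
        simpa using ((hasDerivAt_id c).const_mul ξ).const_add 1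
      have := (hlin.pow 2).add_const K
      simpa [hu, mul_comm, mul_assoc, mul_left_comm] using this
    have hsqrt : HasDerivAt (fun x : ℝ => Real.sqrt ((1 + ξ * x) ^ 2 + K))
        (2 * u * ξ / (2 * S)) c := by
      have := h1.sqrt (by simpa [hu] using harg.ne')
      simpa [hu, hS] using this
    have hlin2 : HasDerivAt (fun x : ℝ => Δr + ξ * Δs * x) (ξ * Δs) c := by
      simpa using ((hasDerivAt_id c).const_mul (ξ * Δs)).const_add Δr
    have hneg : HasDerivAt (fun x : ℝ => -(1 + ξ * x) + Real.sqrt ((1 + ξ * x) ^ 2 + K))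
        (-ξ + 2 * u * ξ / (2 * S)) c := by
      have h2 : HasDerivAt (fun x : ℝ => -(1 + ξ * x)) (-ξ) c := by
        have hlin : HasDerivAt (fun x : ℝ => 1 + ξ * x) ξ c := by
          simpa using ((hasDerivAt_id c).const_mul ξ).const_add 1
        exact hlin.neg
      exact h2.add hsqrt
    have hG : HasDerivAt G
        (ξ * Δs * (-(1 + ξ * c) + Real.sqrt ((1 + ξ * c) ^ 2 + K)) +
          (Δr + ξ * Δs * c) * (-ξ + 2 * u * ξ / (2 * S))) c := by
      exact hlin2.mul hneg
    have hd : deriv G c = ξ * Δs * (-u + S) + (Δr + ξ * Δs * c) * (-ξ + 2 * u * ξ / (2 * S)) := by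
      rw [hG.deriv]
    rw [hd]
    set D : ℝ := ξ * Δs * (-u + S) + (Δr + ξ * Δs * c) * (-ξ + 2 * u * ξ / (2 * S)) with hD
    have hfac : D * S = ξ * (S - u) * (Δs * S - Δr - ξ * Δs * c) := by
      rw [hD]; field_simp; ring
    have hiff2 : Δr / Δs ≤ S - ξ * c ↔ Δr ≤ (S - ξ * c) * Δs := div_le_iff₀ hΔs
    rw [hiff2]
    constructor
    · intro h
      nlinarith [mul_nonneg h hS0.le, mul_pos hξ (sub_pos.2 hSu)]
    · intro h
      have h2 : 0 ≤ D * S := by nlinarith [mul_pos hξ (sub_pos.2 hSu)]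
      nlinarith
  refine ⟨?_, key cbar hc⟩
  have := key 0 le_rfl
  simpa using this
end

section
/- Let Δr > 0, Δs > 0, ξ > 0, K > 0 with ρ̲ := sqrt((1+ξc̄)²+K) - ξc̄ ≤ Δr/Δs ≤ sqrt(1+K) =: ρ̄ and Δr/Δs > 1. Then ĉ := (K/(Δr/Δs - 1) - Δr/Δs - 1)/(2ξ) lies in [0, c̄] and is the global maximizer of G(c) = (Δr + ξΔs c)(-(1+ξc) + sqrt((1+ξc)²+K)) over [0, c̄]. -/
lemma key_ineq (a u K : ℝ) (ha : 0 < a) (hu : 0 ≤ u) (hK : 0 < K) :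
    (a + u) * (Real.sqrt (u ^ 2 + K) - u) ≤ (K + a ^ 2) / 2 := by
  have hau : 0 < a + u := by linarith
  set B := (K + a ^ 2) / (2 * (a + u)) with hBdef
  have hB2 : 2 * (a + u) * B = K + a ^ 2 := by
    rw [hBdef]; field_simp
  have hBpos : 0 ≤ B := by positivity
  have hsq : u ^ 2 + K ≤ (u + B) ^ 2 := by nlinarith [sq_nonneg (a - B)]
  have hsqrt : Real.sqrt (u ^ 2 + K) ≤ u + B :=
    calc Real.sqrt (u ^ 2 + K) ≤ Real.sqrt ((u + B) ^ 2) := Real.sqrt_le_sqrt hsq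
    _ = u + B := Real.sqrt_sq (by linarith)
  have h := mul_le_mul_of_nonneg_left (show Real.sqrt (u ^ 2 + K) - u ≤ B by linarith)
    hau.le
  nlinarith [h]

theorem stmt_12 (Δr Δs ξ K cbar : ℝ) (hΔr : 0 < Δr) (hΔs : 0 < Δs)
    (hξ : 0 < ξ) (hK : 0 < K) (hc : 0 < cbar)
    (hlo : Real.sqrt ((1 + ξ * cbar) ^ 2 + K) - ξ * cbar ≤ Δr / Δs)
    (hhi : Δr / Δs ≤ Real.sqrt (1 + K))
    (hgt : 1 < Δr / Δs) :
    let G := fun c : ℝ =>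
      (Δr + ξ * Δs * c) * (-(1 + ξ * c) + Real.sqrt ((1 + ξ * c) ^ 2 + K))
    let chat := (K / (Δr / Δs - 1) - Δr / Δs - 1) / (2 * ξ)
    chat ∈ Set.Icc (0 : ℝ) cbar ∧ IsMaxOn G (Set.Icc 0 cbar) chat := by
  intro G chat
  have hchat : chat = (K / (Δr / Δs - 1) - Δr / Δs - 1) / (2 * ξ) := rfl
  have hG : ∀ c, G c =
      (Δr + ξ * Δs * c) * (-(1 + ξ * c) + Real.sqrt ((1 + ξ * c) ^ 2 + K)) :=
    fun c => rfl
  clear_value G chat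
  set r := Δr / Δs with hr
  clear_value r
  have ha : 0 < r - 1 := by linarith
  have hne : r - 1 ≠ 0 := ne_of_gt ha
  have hrpos : 0 < r := by linarith
  have hΔr' : Δr = Δs * r := by rw [hr]; field_simp
  -- square of hhi
  have h1K : (0:ℝ) ≤ 1 + K := by linarith
  have hsq1 : r ^ 2 ≤ 1 + K := by
    nlinarith [Real.sq_sqrt h1K, Real.sqrt_nonneg (1 + K)]
  -- chat ≥ 0
  have hNum : 0 ≤ K / (r - 1) - r - 1 := by
    have h2 : (r + 1) ≤ K / (r - 1) := by
      rw [le_div_iff₀ ha]; nlinarith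
    linarith
  have hchat0 : 0 ≤ chat := by
    rw [hchat]; positivity
  -- square of hlo
  have hub : (0:ℝ) ≤ (1 + ξ * cbar) ^ 2 + K := by positivity
  have hsq2 : (1 + ξ * cbar) ^ 2 + K ≤ (r + ξ * cbar) ^ 2 := by
    nlinarith [Real.sq_sqrt hub, Real.sqrt_nonneg ((1 + ξ * cbar) ^ 2 + K),
      mul_pos hξ hc]
  -- chat ≤ cbar
  have hchatc : chat ≤ cbar := by
    rw [hchat, div_le_iff₀ (by positivity)]
    have h3 : K / (r - 1) ≤ r + 1 + 2 * (ξ * cbar) := by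
      rw [div_le_iff₀ ha]; nlinarith
    nlinarith
  -- key identities at chat
  have h1 : ξ * chat = (K / (r - 1) - r - 1) / 2 := by
    rw [hchat]; field_simp
  have hKau : K = (r - 1) ^ 2 + 2 * (r - 1) * (1 + ξ * chat) := by
    rw [h1]; field_simp; ring
  have huhat0 : (0:ℝ) ≤ 1 + ξ * chat := by positivity
  have hsqrt_hat : Real.sqrt ((1 + ξ * chat) ^ 2 + K)
      = (r - 1) + (1 + ξ * chat) := by
    rw [show (1 + ξ * chat) ^ 2 + K = ((r - 1) + (1 + ξ * chat)) ^ 2 by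
      linear_combination hKau]
    exact Real.sqrt_sq (by linarith)
  have hGchat : G chat = Δs * ((K + (r - 1) ^ 2) / 2) := by
    rw [hG chat, hsqrt_hat, hΔr']
    linear_combination (-Δs / 2) * hKau
  refine ⟨⟨hchat0, hchatc⟩, ?_⟩
  intro c hcmem
  obtain ⟨hc0, hccbar⟩ := hcmem
  have hGc : G c = Δs * (((r - 1) + (1 + ξ * c)) *
      (Real.sqrt ((1 + ξ * c) ^ 2 + K) - (1 + ξ * c))) := by
    rw [hG c, hΔr']; ring
  have hkey := key_ineq (r - 1) (1 + ξ * c) K ha (by positivity) hK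
  have hle : G c ≤ Δs * ((K + (r - 1) ^ 2) / 2) := by
    rw [hGc]
    exact mul_le_mul_of_nonneg_left hkey hΔs.le
  show G c ≤ G chat
  rw [hGchat]; exact hle
end

section
/- Under the binding constraint Σᵢ [δ̄ dᵢ + δ²‾ dᵢ²/μ_N + θ_N cᵢ + δ̄ ξ_N cᵢ dᵢ] = b̄ (the mean normal-tissue BED with sparing factors of first moment δ̄ and second moment δ²‾), the target BED satisfies Σᵢ [dᵢ(1 + dᵢ/μ_T) + θ_T cᵢ + ξ_T cᵢ dᵢ] = (μ_N/(δ²‾ μ_T)) b̄ + (1 - μ_N/(δ_eff μ_T)) Σᵢ dᵢ + (θ_T/θ_N - μ_N/(δ²‾ μ_T)) θ_N Σᵢ cᵢ + (ξ_T/ξ_N - μ_N/(δ_eff μ_T)) ξ_N Σᵢ cᵢ dᵢ, where δ_eff = δ²‾/δ̄. -/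
theorem stmt_17 {n : ℕ} (d c : Fin n → ℝ) (μT μN θT θN ξT ξN δbar δ2 bbar : ℝ)
    (hμT : 0 < μT) (hμN : 0 < μN) (hθT : 0 < θT) (hθN : 0 < θN)
    (hξT : 0 < ξT) (hξN : 0 < ξN) (hδbar : 0 < δbar) (hδ2 : 0 < δ2) (hb : 0 < bbar)
    (hbind : ∑ i, (δbar * d i + δ2 * (d i) ^ 2 / μN + θN * c i + δbar * ξN * c i * d i)
      = bbar) :
    ∑ i, (d i * (1 + d i / μT) + θT * c i + ξT * c i * d i) =
      (μN / (δ2 * μT)) * bbar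
      + (1 - μN / ((δ2 / δbar) * μT)) * ∑ i, d i
      + (θT / θN - μN / (δ2 * μT)) * (θN * ∑ i, c i)
      + (ξT / ξN - μN / ((δ2 / δbar) * μT)) * (ξN * ∑ i, c i * d i) := by
  subst hbind
  simp only [Finset.mul_sum, ← Finset.sum_add_distrib]
  apply Finset.sum_congr rfl
  intro i _
  field_simp
  ring
end
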